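/- For every ε ∈ (0, π), ω > 0 and integer k ≥ 0 there exist constants c_k, δ > 0, depending only on ε, ω and k, such that (1 + y) s^k |(d/ds)^k (s E(s, y))| ≤ c_k √|λ| e^{−δ s y} for all λ ∈ Σ_ε with |λ| ≥ ω, all s > 0 and all y ≥ 0. -/

import Mathlib

open MeasureTheory Real

/-- Principal complex square root `√z = z^(1/2)` (principal branch of `cpow`). -/
noncomputable def csqrt (z : ℂ) : ℂ := z ^ (1/2 : ℂ)

/-- The sector `Σ_ε = {λ ∈ ℂ : λ ≠ 0, |Arg λ| < π − ε}`. -/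
def SigmaSector (ε : ℝ) : Set ℂ := {l : ℂ | l ≠ 0 ∧ |l.arg| < Real.pi - ε}

/-- Mikhlin condition (M) with constant `cbar`, with `K = ⌊(d+1)/2⌋`. -/
def CondM (d : ℕ) (m : EuclideanSpace ℝ (Fin (d-1)) → ℂ) (cbar : ℝ) : Prop :=
  ContDiffOn ℝ ((d+1)/2 : ℕ) m {ξ : EuclideanSpace ℝ (Fin (d-1)) | ξ ≠ 0} ∧
  ∀ k : ℕ, k ≤ (d+1)/2 → ∀ ξ : EuclideanSpace ℝ (Fin (d-1)), ξ ≠ 0 →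
    ‖ξ‖ ^ k * ‖iteratedFDerivWithin ℝ k m
        {ξ : EuclideanSpace ℝ (Fin (d-1)) | ξ ≠ 0} ξ‖ ≤ cbar

/-- Parameterized Mikhlin condition (M*) with constants `(cbar, δ)`, `K = ⌊(d+1)/2⌋`. -/
def CondMStar (d : ℕ) (m : EuclideanSpace ℝ (Fin (d-1)) → ℝ → ℂ) (cbar δ : ℝ) : Prop :=
  (∀ y : ℝ, 0 ≤ y →
    ContDiffOn ℝ ((d+1)/2 : ℕ) (fun ξ => m ξ y)
      {ξ : EuclideanSpace ℝ (Fin (d-1)) | ξ ≠ 0}) ∧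
  ∀ k : ℕ, k ≤ (d+1)/2 →
    ∀ ξ : EuclideanSpace ℝ (Fin (d-1)), ξ ≠ 0 → ∀ y : ℝ, 0 ≤ y →
      ‖ξ‖ ^ k * ‖iteratedFDerivWithin ℝ k (fun ξ => m ξ y)
          {ξ : EuclideanSpace ℝ (Fin (d-1)) | ξ ≠ 0} ξ‖ ≤
        cbar * Real.exp (-δ * ‖ξ‖ * y) / (1 + y)

/-- The fundamental multiplier `m₀(s, y)`. -/
noncomputable def m0 (l : ℂ) (α : ℝ) (s y : ℝ) : ℂ :=
  ((csqrt (l + (s:ℂ)^2) + s) / ((α:ℂ) + l + csqrt (l + (s:ℂ)^2) + s)) *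
    ((Complex.exp (-(y:ℂ) * csqrt (l + (s:ℂ)^2)) - Complex.exp (-(y:ℂ) * s)) / l)

/-- `E(s, y) = e^{-ys} - e^{-y√(λ+s²)}`. -/
noncomputable def Efun (l : ℂ) (s y : ℝ) : ℂ :=
  Complex.exp (-(y:ℂ) * s) - Complex.exp (-(y:ℂ) * csqrt (l + (s:ℂ)^2))

/-
Extend `t ↦ t E(t, y)` holomorphically to `F(z) = z (e^{-yz} - e^{-y√(λ+z²)})` on the disc
`|z - s| ≤ r s`, `r = ε / (8π)`. There `|arg z| ≤ ε/8`, so `λ` and `z²` lie in a common sector of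
opening `< π`; projecting onto its bisector gives `|μ| + Re μ ≥ 2κ² (|λ| + |z|²)` for `μ = λ + z²`,
`κ² = sin(ε/2) sin(ε/4)`, i.e. `Re √μ ≥ κ · max(√|λ|, |z|)`. Hence both exponents have real part
`≤ -(κ/2) s y`, and since `(z - √μ)(z + √μ) = -λ`, `|z - √μ| ≤ √|λ| / κ`. This gives
`(1 + y) |F| ≲ s y √|λ| e^{-(κ/2) s y}` on the disc; Cauchy's estimate on the circle of radius `r s`
turns it into the bound for `s^k F^{(k)}(s)`, and `x e^{-δx} ≤ (2/δ) e^{-δx/2}` absorbs `x = s y`.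
-/

lemma re_mul_exp_neg_mul_I (μ : ℂ) (ψ : ℝ) :
    (μ * Complex.exp (-(ψ * Complex.I))).re = μ.re * Real.cos ψ + μ.im * Real.sin ψ := by
  rw [show -(ψ * Complex.I) = ((-ψ : ℝ) : ℂ) * Complex.I by push_cast; ring, Complex.mul_re,
    Complex.exp_ofReal_mul_I_re, Complex.exp_ofReal_mul_I_im, Real.cos_neg, Real.sin_neg]
  ring

/-- `μ + μ e^{-2iψ} = 2 cos ψ · μ e^{-iψ}` and `Re (μ e^{-2iψ}) ≤ ‖μ‖`. -/
lemma two_mul_cos_mul_re_le_norm_add_re (μ : ℂ) (ψ : ℝ) :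
    2 * Real.cos ψ * (μ * Complex.exp (-(ψ * Complex.I))).re ≤ ‖μ‖ + μ.re := by
  have h := (Complex.re_le_norm (μ * Complex.exp (-((2 * ψ : ℝ) * Complex.I)))).trans_eq
    (by rw [norm_mul, ← neg_mul, ← Complex.ofReal_neg, Complex.norm_exp_ofReal_mul_I, mul_one])
  rw [re_mul_exp_neg_mul_I, Real.cos_two_mul, Real.sin_two_mul] at h
  rw [re_mul_exp_neg_mul_I]
  linear_combination h

lemma re_polar_mul_exp_neg (r θ ψ : ℝ) :
    (r * Complex.exp (θ * Complex.I) * Complex.exp (-(ψ * Complex.I))).re =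
      r * Real.cos (θ - ψ) := by
  rw [mul_assoc, ← Complex.exp_add,
    show θ * Complex.I + -(ψ * Complex.I) = ((θ - ψ : ℝ) : ℂ) * Complex.I by push_cast; ring,
    Complex.re_ofReal_mul, Complex.exp_ofReal_mul_I_re]

lemma sq_eq_polar (z : ℂ) :
    z ^ 2 = ((‖z‖ ^ 2 : ℝ) : ℂ) * Complex.exp ((2 * z.arg : ℝ) * Complex.I) := by
  conv_lhs => rw [← Complex.norm_mul_exp_arg_mul_I z]
  rw [mul_pow, ← Complex.exp_nat_mul]
  push_cast
  ring_nf

lemma sin_mul_le_mul_cos {r θ η : ℝ} (hr : 0 ≤ r) (hη : 0 ≤ η) (hθ : |θ| ≤ π / 2 - η) :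
    Real.sin η * r ≤ r * Real.cos θ := by
  rw [mul_comm, ← Real.cos_pi_div_two_sub, ← Real.cos_abs θ]
  exact mul_le_mul_of_nonneg_left
    (Real.cos_le_cos_of_nonneg_of_le_pi (abs_nonneg θ) (by linarith [Real.pi_pos]) hθ) hr

lemma exists_cos_eq_sin_abs_arg_sub_le {ε θ : ℝ} (hθ : |θ| ≤ π - ε) :
    ∃ ψ : ℝ, Real.cos ψ = Real.sin (ε / 2) ∧ |θ - ψ| ≤ π / 2 - ε / 2 ∧ |ψ| ≤ π / 2 - ε / 2 := by
  have hε : ε ≤ π := by linarith [abs_nonneg θ]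
  rcases le_total 0 θ with h | h
  · refine ⟨π / 2 - ε / 2, by rw [Real.cos_pi_div_two_sub], ?_, ?_⟩ <;>
      rw [abs_le] at * <;> constructor <;> linarith
  · refine ⟨-(π / 2 - ε / 2), by rw [Real.cos_neg, Real.cos_pi_div_two_sub], ?_, ?_⟩ <;>
      rw [abs_le] at * <;> constructor <;> linarith

noncomputable def sectorConst (ε : ℝ) : ℝ := Real.sqrt (Real.sin (ε / 2) * Real.sin (ε / 4))

section SectorConst

variable {ε : ℝ} (hε0 : 0 < ε) (hεπ : ε < π)
include hε0 hεπ

lemma sq_sectorConst : sectorConst ε ^ 2 = Real.sin (ε / 2) * Real.sin (ε / 4) :=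
  Real.sq_sqrt (mul_nonneg
    (Real.sin_nonneg_of_nonneg_of_le_pi (by positivity) (by linarith))
    (Real.sin_nonneg_of_nonneg_of_le_pi (by positivity) (by linarith)))

lemma sectorConst_pos : 0 < sectorConst ε :=
  Real.sqrt_pos.mpr (mul_pos (Real.sin_pos_of_pos_of_lt_pi (by positivity) (by linarith))
    (Real.sin_pos_of_pos_of_lt_pi (by positivity) (by linarith)))

lemma sectorConst_le_one : sectorConst ε ≤ 1 :=
  Real.sqrt_le_one.mpr (mul_le_one₀ (Real.sin_le_one _)
    (Real.sin_nonneg_of_nonneg_of_le_pi (by positivity) (by linarith)) (Real.sin_le_one _))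

lemma two_mul_sectorConst_sq_mul_le_norm_add_re {l z : ℂ} (hl : |l.arg| ≤ π - ε)
    (hz : |z.arg| ≤ ε / 8) :
    2 * sectorConst ε ^ 2 * (‖l‖ + ‖z‖ ^ 2) ≤ ‖l + z ^ 2‖ + (l + z ^ 2).re := by
  -- `ψ = ±(π - ε)/2` bisects the half of the sector containing `l`; both `l` and `z²` make an
  -- angle at most `π/2 - ε/4` with it.
  obtain ⟨ψ, hψ, hlψ, hψle⟩ := exists_cos_eq_sin_abs_arg_sub_le hl
  have hl' : Real.sin (ε / 4) * ‖l‖ ≤ (l * Complex.exp (-(ψ * Complex.I))).re := by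
    conv_rhs => rw [← Complex.norm_mul_exp_arg_mul_I l]
    rw [re_polar_mul_exp_neg]
    exact sin_mul_le_mul_cos (norm_nonneg l) (by positivity) (by linarith)
  have hz' : Real.sin (ε / 4) * ‖z‖ ^ 2 ≤ (z ^ 2 * Complex.exp (-(ψ * Complex.I))).re := by
    rw [sq_eq_polar, re_polar_mul_exp_neg]
    refine sin_mul_le_mul_cos (by positivity) (by positivity) ?_
    rw [abs_le] at *
    constructor <;> linarith
  have hsin : 0 ≤ Real.sin (ε / 2) :=
    Real.sin_nonneg_of_nonneg_of_le_pi (by positivity) (by linarith)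
  calc 2 * sectorConst ε ^ 2 * (‖l‖ + ‖z‖ ^ 2)
      = 2 * Real.sin (ε / 2) * (Real.sin (ε / 4) * ‖l‖ + Real.sin (ε / 4) * ‖z‖ ^ 2) := by
        rw [sq_sectorConst hε0 hεπ]; ring
    _ ≤ 2 * Real.cos ψ * ((l + z ^ 2) * Complex.exp (-(ψ * Complex.I))).re := by
      rw [hψ, add_mul, Complex.add_re]
      gcongr
    _ ≤ ‖l + z ^ 2‖ + (l + z ^ 2).re := two_mul_cos_mul_re_le_norm_add_re _ _

end SectorConst

lemma mem_slitPlane_of_norm_add_re_pos {μ : ℂ} (h : 0 < ‖μ‖ + μ.re) : μ ∈ Complex.slitPlane := by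
  rw [Complex.mem_slitPlane_iff]
  by_contra! hμ
  have : ‖μ‖ = -μ.re := by
    rw [← Complex.re_add_im μ, hμ.2]
    simp [abs_of_nonpos hμ.1]
  linarith

lemma re_csqrt (μ : ℂ) : (csqrt μ).re = Real.sqrt ((‖μ‖ + μ.re) / 2) := by
  rw [csqrt, one_div, Complex.cpow_inv_two_re]

lemma csqrt_sq (μ : ℂ) : csqrt μ ^ 2 = μ := by
  rw [csqrt, one_div]
  exact Complex.cpow_ofNat_inv_pow _ _

lemma norm_exp_sub_exp_le {a b : ℂ} {M : ℝ} (ha : a.re ≤ M) (hb : b.re ≤ M) :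
    ‖Complex.exp a - Complex.exp b‖ ≤ Real.exp M * ‖a - b‖ :=
  (convex_halfSpace_re_le M).norm_image_sub_le_of_norm_deriv_le
    (fun _ _ => Complex.differentiableAt_exp)
    (fun x hx => by rw [Complex.deriv_exp, Complex.norm_exp]; exact Real.exp_le_exp.mpr hx) hb ha

section NearPositiveReal

variable {s r : ℝ} {z : ℂ} (hz : ‖z - s‖ ≤ r * s)
include hz

lemma le_re_of_norm_sub_le : (1 - r) * s ≤ z.re := by
  have := (abs_le.mp ((Complex.abs_re_le_norm (z - s)).trans hz)).1
  rw [Complex.sub_re, Complex.ofReal_re] at this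
  linarith

lemma norm_le_of_norm_sub_le (hs : 0 < s) : ‖z‖ ≤ (1 + r) * s := by
  have := norm_le_norm_add_norm_sub' z (s : ℂ)
  rw [Complex.norm_of_nonneg hs.le] at this
  linarith

lemma abs_arg_le_of_norm_sub_le (hs : 0 < s) (hr : r ≤ 1 / 2) : |z.arg| ≤ π * r := by
  have hr0 : 0 ≤ r := nonneg_of_mul_nonneg_left ((norm_nonneg _).trans hz) hs
  have hre := le_re_of_norm_sub_le hz
  have him : |z.im| ≤ r * s := by
    simpa using (Complex.abs_im_le_norm (z - s)).trans hz
  have hzn : (1 - r) * s ≤ ‖z‖ := hre.trans (Complex.re_le_norm z)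
  have hπ2 : |z.arg| ≤ π / 2 :=
    Complex.abs_arg_le_pi_div_two_iff.mpr (le_trans (by nlinarith) hre)
  -- Jordan's inequality `2|θ|/π ≤ |sin θ|` with `sin (arg z) = Im z / ‖z‖`.
  have hjordan := Real.mul_le_sin (abs_nonneg z.arg) hπ2
  rw [← Real.abs_sin_eq_sin_abs_of_abs_le_pi (by linarith [Real.pi_pos]), Complex.sin_arg,
    abs_div, abs_norm] at hjordan
  have : |z.im| / ‖z‖ ≤ 2 * r := by
    rw [div_le_iff₀ (by nlinarith)]
    nlinarith [mul_le_mul_of_nonneg_left hzn hr0,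
      mul_nonneg (mul_nonneg hr0 hs.le) (by linarith : (0 : ℝ) ≤ 1 - 2 * r)]
  have := hjordan.trans this
  rw [div_mul_eq_mul_div, div_le_iff₀ Real.pi_pos] at this
  nlinarith [Real.pi_pos]

end NearPositiveReal

noncomputable def sEfunExt (l : ℂ) (y : ℝ) (z : ℂ) : ℂ :=
  z * (Complex.exp (-(y : ℂ) * z) - Complex.exp (-(y : ℂ) * csqrt (l + z ^ 2)))

lemma differentiableAt_sEfunExt {l z : ℂ} (h : l + z ^ 2 ∈ Complex.slitPlane) (y : ℝ) :
    DifferentiableAt ℂ (sEfunExt l y) z := by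
  have hsqrt : DifferentiableAt ℂ (fun z : ℂ => csqrt (l + z ^ 2)) z :=
    ((differentiableAt_const l).add (differentiableAt_pow 2)).cpow (differentiableAt_const _) h
  unfold sEfunExt
  fun_prop

noncomputable def discRatio (ε : ℝ) : ℝ := ε / (8 * π)

lemma discRatio_pos {ε : ℝ} (hε0 : 0 < ε) : 0 < discRatio ε := by
  rw [discRatio]; positivity

lemma discRatio_le_half {ε : ℝ} (hεπ : ε < π) : discRatio ε ≤ 1 / 2 := by
  rw [discRatio, div_le_iff₀ (by positivity)]
  linarith [Real.pi_gt_three]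

section Disc

variable {ε : ℝ} (hε0 : 0 < ε) (hεπ : ε < π) {l : ℂ} (hl0 : l ≠ 0) (hl : |l.arg| ≤ π - ε)
  {s : ℝ} (hs : 0 < s) {z : ℂ} (hz : ‖z - s‖ ≤ discRatio ε * s)
include hε0 hεπ hl0 hl hs hz

lemma csqrt_bounds_of_mem_disc :
    l + z ^ 2 ∈ Complex.slitPlane ∧ sectorConst ε * Real.sqrt ‖l‖ ≤ (csqrt (l + z ^ 2)).re ∧
      sectorConst ε * ‖z‖ ≤ (csqrt (l + z ^ 2)).re := by
  have hz' : |z.arg| ≤ ε / 8 := by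
    have hπr : π * discRatio ε = ε / 8 := by
      rw [discRatio]; field_simp
    exact hπr ▸ abs_arg_le_of_norm_sub_le hz hs (discRatio_le_half hεπ)
  have hsec := two_mul_sectorConst_sq_mul_le_norm_add_re hε0 hεπ hl hz'
  have hκ := sectorConst_pos hε0 hεπ
  have hlpos : 0 < ‖l‖ := norm_pos_iff.mpr hl0
  have hre : Real.sqrt (sectorConst ε ^ 2 * (‖l‖ + ‖z‖ ^ 2)) ≤ (csqrt (l + z ^ 2)).re := by
    rw [re_csqrt]
    exact Real.sqrt_le_sqrt (by linarith)
  refine ⟨mem_slitPlane_of_norm_add_re_pos ?_, le_trans ?_ hre, le_trans ?_ hre⟩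
  · nlinarith [mul_pos (pow_pos hκ 2) (add_pos_of_pos_of_nonneg hlpos (sq_nonneg ‖z‖))]
  · calc sectorConst ε * Real.sqrt ‖l‖ = Real.sqrt (sectorConst ε ^ 2 * ‖l‖) := by
          rw [Real.sqrt_mul (sq_nonneg _), Real.sqrt_sq hκ.le]
      _ ≤ _ := Real.sqrt_le_sqrt (by nlinarith [sq_nonneg ‖z‖])
  · calc sectorConst ε * ‖z‖ = Real.sqrt (sectorConst ε ^ 2 * ‖z‖ ^ 2) := by
          rw [Real.sqrt_mul (sq_nonneg _), Real.sqrt_sq hκ.le, Real.sqrt_sq (norm_nonneg z)]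
      _ ≤ _ := Real.sqrt_le_sqrt (by nlinarith)

lemma re_bounds_of_mem_disc :
    sectorConst ε / 2 * s ≤ z.re ∧ sectorConst ε / 2 * s ≤ (csqrt (l + z ^ 2)).re := by
  have hκ1 := sectorConst_le_one hε0 hεπ
  have hκ0 := (sectorConst_pos hε0 hεπ).le
  have hre := le_re_of_norm_sub_le hz
  have hsqrt := (csqrt_bounds_of_mem_disc hε0 hεπ hl0 hl hs hz).2.2
  have hzre : s / 2 ≤ z.re := by nlinarith [discRatio_le_half hεπ]
  refine ⟨by nlinarith, ?_⟩
  calc sectorConst ε / 2 * s ≤ sectorConst ε * z.re := by nlinarith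
    _ ≤ sectorConst ε * ‖z‖ := by gcongr; exact Complex.re_le_norm z
    _ ≤ _ := hsqrt

lemma norm_sub_csqrt_le_of_mem_disc :
    ‖z - csqrt (l + z ^ 2)‖ ≤ Real.sqrt ‖l‖ / sectorConst ε := by
  obtain ⟨-, hwl, -⟩ := csqrt_bounds_of_mem_disc hε0 hεπ hl0 hl hs hz
  have hzre := (re_bounds_of_mem_disc hε0 hεπ hl0 hl hs hz).1
  have hκ := sectorConst_pos hε0 hεπ
  set w := csqrt (l + z ^ 2)
  have hprod : ‖z - w‖ * ‖z + w‖ = ‖l‖ := by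
    rw [← norm_mul, show (z - w) * (z + w) = z ^ 2 - w ^ 2 by ring, csqrt_sq]
    simp
  have hsum : sectorConst ε * Real.sqrt ‖l‖ ≤ ‖z + w‖ := by
    refine hwl.trans (le_trans ?_ (Complex.re_le_norm _))
    rw [Complex.add_re]
    nlinarith
  rw [le_div_iff₀ hκ]
  have hlpos := Real.sqrt_pos.mpr (norm_pos_iff.mpr hl0)
  have : ‖z - w‖ * (sectorConst ε * Real.sqrt ‖l‖) ≤ Real.sqrt ‖l‖ * Real.sqrt ‖l‖ := by
    rw [Real.mul_self_sqrt (norm_nonneg l)]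
    calc _ ≤ ‖z - w‖ * ‖z + w‖ := mul_le_mul_of_nonneg_left hsum (norm_nonneg _)
      _ = ‖l‖ := hprod
  nlinarith

lemma one_add_mul_norm_sEfunExt_le_of_mem_disc {ω y : ℝ} (hω : 0 < ω) (hωl : ω ≤ ‖l‖)
    (hy : 0 ≤ y) :
    (1 + y) * ‖sEfunExt l y z‖ ≤ (2 / sectorConst ε + 4 / Real.sqrt ω) * Real.sqrt ‖l‖ *
      (s * y) * Real.exp (-(sectorConst ε / 2 * (s * y))) := by
  obtain ⟨hzre, hwre⟩ := re_bounds_of_mem_disc hε0 hεπ hl0 hl hs hz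
  have hzs : ‖z‖ ≤ 2 * s := by
    have := norm_le_of_norm_sub_le hz hs
    nlinarith [discRatio_le_half hεπ]
  set M := -(sectorConst ε / 2 * (s * y))
  set w := csqrt (l + z ^ 2)
  have ha : (-(y : ℂ) * z).re ≤ M := by
    simp only [M, neg_mul, Complex.neg_re, Complex.re_ofReal_mul]
    nlinarith
  have hb : (-(y : ℂ) * w).re ≤ M := by
    simp only [M, neg_mul, Complex.neg_re, Complex.re_ofReal_mul]
    nlinarith
  have hexp_le {a : ℂ} (h : a.re ≤ M) : ‖Complex.exp a‖ ≤ Real.exp M := by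
    rw [Complex.norm_exp]; exact Real.exp_le_exp.mpr h
  have hdiff : ‖Complex.exp (-(y : ℂ) * z) - Complex.exp (-(y : ℂ) * w)‖ ≤ 2 * Real.exp M :=
    (norm_sub_le _ _).trans (by linarith [hexp_le ha, hexp_le hb])
  have hdiff' : ‖Complex.exp (-(y : ℂ) * z) - Complex.exp (-(y : ℂ) * w)‖ ≤
      Real.exp M * (y * (Real.sqrt ‖l‖ / sectorConst ε)) := by
    refine (norm_exp_sub_exp_le ha hb).trans ?_
    rw [← mul_sub, norm_mul, norm_neg, Complex.norm_of_nonneg hy]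
    gcongr
    exact norm_sub_csqrt_le_of_mem_disc hε0 hεπ hl0 hl hs hz
  have hωl' : 1 ≤ Real.sqrt ‖l‖ / Real.sqrt ω :=
    (one_le_div (Real.sqrt_pos.mpr hω)).mpr (Real.sqrt_le_sqrt hωl)
  rw [sEfunExt, norm_mul]
  calc (1 + y) * (‖z‖ * ‖Complex.exp (-(y : ℂ) * z) - Complex.exp (-(y : ℂ) * w)‖)
      ≤ 2 * s * (Real.exp M * (y * (Real.sqrt ‖l‖ / sectorConst ε))) +
          y * (2 * s * (2 * Real.exp M)) := by
        rw [add_mul, one_mul]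
        gcongr
    _ ≤ 2 * s * (Real.exp M * (y * (Real.sqrt ‖l‖ / sectorConst ε))) +
          y * (2 * s * (2 * Real.exp M)) * (Real.sqrt ‖l‖ / Real.sqrt ω) := by
        have := le_mul_of_one_le_right (by positivity : 0 ≤ y * (2 * s * (2 * Real.exp M))) hωl'
        linarith
    _ = _ := by ring

end Disc

lemma differentiableOn_sEfunExt_closedBall {ε : ℝ} (hε0 : 0 < ε) (hεπ : ε < π) {l : ℂ}
    (hl0 : l ≠ 0) (hl : |l.arg| ≤ π - ε) {s : ℝ} (hs : 0 < s) (y : ℝ) :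
    DifferentiableOn ℂ (sEfunExt l y) (Metric.closedBall (s : ℂ) (discRatio ε * s)) :=
  fun _ hz => (differentiableAt_sEfunExt (csqrt_bounds_of_mem_disc hε0 hεπ hl0 hl hs
    (mem_closedBall_iff_norm.mp hz)).1 y).differentiableWithinAt

lemma iteratedDeriv_comp_ofReal {F : ℂ → ℂ} {U : Set ℂ} (hU : IsOpen U)
    (hF : DifferentiableOn ℂ F U) (n : ℕ) {t : ℝ} (ht : (t : ℂ) ∈ U) :
    iteratedDeriv n (fun x : ℝ => F x) t = iteratedDeriv n F t := by
  induction n generalizing t with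
  | zero => simp
  | succ n ih =>
    have hev : (fun x : ℝ => iteratedDeriv n (fun x : ℝ => F x) x)
        =ᶠ[nhds t] fun x : ℝ => iteratedDeriv n F x := by
      filter_upwards [(hU.preimage Complex.continuous_ofReal).mem_nhds ht] with x hx
      exact ih hx
    have hda : AnalyticOnNhd ℂ (iteratedDeriv n F) U := by
      rw [iteratedDeriv_eq_iterate]
      exact (hF.analyticOnNhd hU).iterated_deriv n
    rw [iteratedDeriv_succ, iteratedDeriv_succ, hev.deriv_eq]
    exact ((hda t ht).differentiableAt.hasDerivAt).comp_ofReal.deriv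

lemma pow_mul_norm_iteratedDeriv_comp_ofReal_le {F : ℂ → ℂ} {s r C : ℝ} (hs : 0 < s)
    (hr : 0 < r) (hF : DifferentiableOn ℂ F (Metric.closedBall (s : ℂ) (r * s)))
    (hC : ∀ z ∈ Metric.sphere (s : ℂ) (r * s), ‖F z‖ ≤ C) (k : ℕ) :
    s ^ k * ‖iteratedDeriv k (fun t : ℝ => F t) s‖ ≤ k.factorial / r ^ k * C := by
  have hR : 0 < r * s := mul_pos hr hs
  rw [iteratedDeriv_comp_ofReal Metric.isOpen_ball (hF.mono Metric.ball_subset_closedBall) k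
    (Metric.mem_ball_self hR)]
  calc s ^ k * ‖iteratedDeriv k F s‖ ≤ s ^ k * (k.factorial * C / (r * s) ^ k) := by
        gcongr
        exact Complex.norm_iteratedDeriv_le_of_forall_mem_sphere_norm_le k hR
          (hF.diffContOnCl_ball subset_rfl) hC
    _ = k.factorial / r ^ k * C := by
      field_simp
      ring

lemma mul_exp_neg_le {δ : ℝ} (hδ : 0 < δ) (x : ℝ) :
    x * Real.exp (-(δ * x)) ≤ 2 / δ * Real.exp (-(δ / 2 * x)) := by
  have h : x ≤ 2 / δ * Real.exp (δ / 2 * x) := by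
    rw [div_mul_eq_mul_div, le_div_iff₀ hδ]
    nlinarith [Real.add_one_le_exp (δ / 2 * x)]
  calc x * Real.exp (-(δ * x)) ≤ 2 / δ * Real.exp (δ / 2 * x) * Real.exp (-(δ * x)) := by
        gcongr
    _ = 2 / δ * Real.exp (-(δ / 2 * x)) := by
      rw [mul_assoc, ← Real.exp_add]
      ring_nf

/-- `(1+y) s^k |(d/ds)^k (s E(s,y))| ≤ c_k √|λ| e^{-δ s y}`. -/
theorem stmt_15 (ε ω : ℝ) (hε : ε ∈ Set.Ioo 0 Real.pi) (hω : 0 < ω) (k : ℕ) :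
    ∃ cₖ δ : ℝ, 0 < cₖ ∧ 0 < δ ∧
      ∀ l ∈ SigmaSector ε, ω ≤ ‖l‖ → ∀ s y : ℝ, 0 < s → 0 ≤ y →
        (1 + y) * s ^ k *
            ‖iteratedDeriv k (fun t : ℝ => (t:ℂ) * Efun l t y) s‖ ≤
          cₖ * Real.sqrt ‖l‖ * Real.exp (-δ * s * y) := by
  obtain ⟨hε0, hεπ⟩ := hε
  set κ := sectorConst ε
  have hκ : 0 < κ := sectorConst_pos hε0 hεπ
  have hr := discRatio_pos hε0
  set K := 2 / κ + 4 / Real.sqrt ω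
  refine ⟨k.factorial / discRatio ε ^ k * K * (4 / κ), κ / 4, by positivity, by positivity, ?_⟩
  rintro l ⟨hl0, hl⟩ hωl s y hs hy
  have hbound : ∀ z ∈ Metric.sphere (s : ℂ) (discRatio ε * s), ‖sEfunExt l y z‖ ≤
      K * Real.sqrt ‖l‖ * (s * y) * Real.exp (-(κ / 2 * (s * y))) / (1 + y) := fun z hz => by
    rw [le_div_iff₀ (by positivity), mul_comm]
    exact one_add_mul_norm_sEfunExt_le_of_mem_disc hε0 hεπ hl0 hl.le hs
      (mem_sphere_iff_norm.mp hz).le hω hωl hy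
  have hcauchy := pow_mul_norm_iteratedDeriv_comp_ofReal_le hs hr
    (differentiableOn_sEfunExt_closedBall hε0 hεπ hl0 hl.le hs y) hbound k
  calc (1 + y) * s ^ k * ‖iteratedDeriv k (fun t : ℝ => (t:ℂ) * Efun l t y) s‖
      ≤ (1 + y) * (k.factorial / discRatio ε ^ k *
          (K * Real.sqrt ‖l‖ * (s * y) * Real.exp (-(κ / 2 * (s * y))) / (1 + y))) := by
        rw [mul_assoc]
        exact mul_le_mul_of_nonneg_left hcauchy (by positivity)
    _ = k.factorial / discRatio ε ^ k * K * Real.sqrt ‖l‖ *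
          ((s * y) * Real.exp (-(κ / 2 * (s * y)))) := by
        field_simp
    _ ≤ k.factorial / discRatio ε ^ k * K * Real.sqrt ‖l‖ *
          (2 / (κ / 2) * Real.exp (-(κ / 2 / 2 * (s * y)))) :=
        mul_le_mul_of_nonneg_left (mul_exp_neg_le (by positivity) (s * y)) (by positivity)
    _ = _ := by ring_nf
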